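/- Let f : ℝⁿ → ℝ be σ-strongly convex with minimizer θ⋆, and let g_i : ℝⁿ → ℝ for i = 1,…,c each be L_i-Lipschitz with g_i(θ⋆) ≤ -ζ. Define ε_crit := (σ/2) · min_i (ζ/L_i)². Then any θ with |f(θ) - f(θ⋆)| ≤ ε_crit satisfies g_i(θ) ≤ 0 for all i. -/

import Mathlib

/-!
Strong convexity gives quadratic growth away from the minimizer,
`σ/2 ‖θ - θ⋆‖² ≤ f θ - f θ⋆`, so an `ε_crit`-optimal `θ` lies within `ζ / L i` of `θ⋆`;
the `L i`-Lipschitz constraint `g i` can then rise by at most `ζ` above `g i θ⋆ ≤ -ζ`.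
-/

open Filter Set Topology

theorem UniformConvexOn.le_sub_of_isMinOn {E : Type*} [NormedAddCommGroup E] [NormedSpace ℝ E]
    {s : Set E} {φ : ℝ → ℝ} {f : E → ℝ} {x₀ x : E} (hf : UniformConvexOn s φ f)
    (hmin : IsMinOn f s x₀) (hx₀ : x₀ ∈ s) (hx : x ∈ s) :
    φ ‖x - x₀‖ ≤ f x - f x₀ := by
  have hsegment : ∀ t ∈ Ioo (0 : ℝ) 1, (1 - t) * φ ‖x - x₀‖ ≤ f x - f x₀ := by
    rintro t ⟨ht₀, ht₁⟩
    have hconv := hf.2 hx hx₀ ht₀.le (sub_nonneg.2 ht₁.le) (add_sub_cancel t 1)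
    have hmin_le := isMinOn_iff.1 hmin _
      (hf.1 hx hx₀ ht₀.le (sub_nonneg.2 ht₁.le) (add_sub_cancel t 1))
    simp only [smul_eq_mul] at hconv
    refine le_of_mul_le_mul_left ?_ ht₀
    linarith
  have hlim : Tendsto (fun t : ℝ => (1 - t) * φ ‖x - x₀‖) (𝓝[>] 0) (𝓝 (φ ‖x - x₀‖)) := by
    have := ((continuous_const.sub continuous_id).mul continuous_const).tendsto
      (f := fun t : ℝ => (1 - t) * φ ‖x - x₀‖) 0
    simpa using this.mono_left nhdsWithin_le_nhds
  exact le_of_tendsto hlim (by filter_upwards [Ioo_mem_nhdsGT one_pos] using hsegment)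

theorem eps_crit_screening_general
    {n : ℕ} {ι : Type*}
    (f : EuclideanSpace ℝ (Fin n) → ℝ) (g : ι → EuclideanSpace ℝ (Fin n) → ℝ)
    (σ ζ : ℝ) (L : ι → ℝ)
    (hσ : 0 < σ) (hζ : 0 < ζ) (hL : ∀ i, 0 < L i)
    (hsc : ConvexOn ℝ Set.univ (fun θ => f θ - (σ / 2) * ‖θ‖ ^ 2))
    (θstar : EuclideanSpace ℝ (Fin n)) (hmin : ∀ θ, f θstar ≤ f θ)
    (hLip : ∀ i, ∀ x y, |g i x - g i y| ≤ L i * ‖x - y‖)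
    (hfeas : ∀ i, g i θstar ≤ -ζ)
    (θ : EuclideanSpace ℝ (Fin n))
    (hθ : |f θ - f θstar| ≤ (σ / 2) * ⨅ i, (ζ / L i) ^ 2) :
    ∀ i, g i θ ≤ 0 := by
  intro i
  have hgrowth : σ / 2 * ‖θ - θstar‖ ^ 2 ≤ f θ - f θstar :=
    (strongConvexOn_iff_convex.2 hsc).le_sub_of_isMinOn (isMinOn_univ_iff.2 hmin) trivial trivial
  have hinf : ⨅ j, (ζ / L j) ^ 2 ≤ (ζ / L i) ^ 2 :=
    ciInf_le ⟨0, by rintro _ ⟨j, rfl⟩; positivity⟩ i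
  have hdist : ‖θ - θstar‖ ≤ ζ / L i := by
    have hsq : σ / 2 * ‖θ - θstar‖ ^ 2 ≤ σ / 2 * (ζ / L i) ^ 2 :=
      calc σ / 2 * ‖θ - θstar‖ ^ 2 ≤ |f θ - f θstar| := hgrowth.trans (le_abs_self _)
        _ ≤ σ / 2 * ⨅ j, (ζ / L j) ^ 2 := hθ
        _ ≤ σ / 2 * (ζ / L i) ^ 2 := by gcongr
    have hζL : 0 ≤ ζ / L i := (div_pos hζ (hL i)).le
    exact (pow_le_pow_iff_left₀ (norm_nonneg _) hζL two_ne_zero).1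
      (le_of_mul_le_mul_left hsq (half_pos hσ))
  calc g i θ ≤ g i θstar + L i * ‖θ - θstar‖ := by
        linarith [(le_abs_self _).trans (hLip i θ θstar)]
    _ ≤ -ζ + L i * (ζ / L i) := by gcongr; exacts [hfeas i, (hL i).le]
    _ = 0 := by rw [mul_div_cancel₀ ζ (hL i).ne']; ring

/-- Proposition 1 of the paper: with `f` `σ`-strongly convex with minimizer `θ⋆` and
constraints `g i` each `L i`-Lipschitz with margin `g i θ⋆ ≤ -ζ`, any `θ` with
`|f θ - f θ⋆| ≤ ε_crit := (σ/2) · min_i (ζ / L i)²` satisfies `g i θ ≤ 0` for all `i`. -/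
theorem eps_crit_screening
    {n : ℕ} {ι : Type*} [Fintype ι] [Nonempty ι]
    (f : EuclideanSpace ℝ (Fin n) → ℝ) (g : ι → EuclideanSpace ℝ (Fin n) → ℝ)
    (σ ζ : ℝ) (L : ι → ℝ)
    (hσ : 0 < σ) (hζ : 0 < ζ) (hL : ∀ i, 0 < L i)
    (hsc : ConvexOn ℝ Set.univ (fun θ => f θ - (σ / 2) * ‖θ‖ ^ 2))
    (θstar : EuclideanSpace ℝ (Fin n)) (hmin : ∀ θ, f θstar ≤ f θ)
    (hLip : ∀ i, ∀ x y, |g i x - g i y| ≤ L i * ‖x - y‖)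
    (hfeas : ∀ i, g i θstar ≤ -ζ)
    (θ : EuclideanSpace ℝ (Fin n))
    (hθ : |f θ - f θstar| ≤ (σ / 2) * ⨅ i, (ζ / L i) ^ 2) :
    ∀ i, g i θ ≤ 0 :=
  eps_crit_screening_general f g σ ζ L hσ hζ hL hsc θstar hmin hLip hfeas θ hθ
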